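/- In a finite eGDN whose dependency graph G_T (constructed by a deterministic closure process from the initially modified slots S_i using union monotonic dir_Δ functions) is acyclic, the edge set of G_T is uniquely determined (up to isomorphism) by the eGDN G and the initial set S_i, independently of the order in which operation nodes are dequeued during construction. -/

import Mathlib

/-- A state of the dependency-graph construction: the queue of operation nodes,
the recorded sets `C[o]` of input slots with potentially unhandled deltas, and
the edge set of the trigger graph `G_T`. -/
structure CState (O S : Type*) where
  queue : List O
  C : O → Set S
  edges : Set (O × O)

section

variable {O S : Type*} (inS outS : O → Set S)

/-- An operation node `o` is adjacent to the slot set `X`. -/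
def Adjacent (X : Set S) (o : O) : Prop :=
  ((inS o ∪ outS o) ∩ X).Nonempty

/-- Initial state for the set `Si` of initially modified slots: the queue
enumerates (without repetition) exactly the operation nodes adjacent to `Si`,
`C[o] = Si ∩ in(o)` for all nodes adjacent to `Si` (and in particular for all
nodes), and the edge set is empty. -/
def Init (Si : Set S) (st : CState O S) : Prop :=
  st.queue.Nodup ∧
  (∀ o, o ∈ st.queue ↔ Adjacent inS outS Si o) ∧
  (∀ o, st.C o = Si ∩ inS o) ∧
  st.edges = ∅

/-- One construction step: dequeue `o`, compute `S_o = dir_Δ(o, C[o])`, add an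
edge from `o` to every node adjacent to `S_o` other than `o`, add `S_o ∩ in(o')`
to `C[o']` for all such nodes `o'`, enqueue them if absent, and reset `C[o]`. -/
def CStep (dirΔ : O → Set S → Set S) (st st' : CState O S) : Prop :=
  ∃ o q, st.queue = o :: q ∧
    st'.edges = st.edges ∪
      {p | p.1 = o ∧ p.2 ≠ o ∧ Adjacent inS outS (dirΔ o (st.C o)) p.2} ∧
    st'.C o = ∅ ∧
    (∀ o'', o'' ≠ o → st'.C o'' = st.C o'' ∪
        {x | x ∈ dirΔ o (st.C o) ∩ inS o'' ∧
          Adjacent inS outS (dirΔ o (st.C o)) o''}) ∧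
    st'.queue.Nodup ∧
    (∀ o', o' ∈ st'.queue ↔
      o' ∈ q ∨ (o' ≠ o ∧ Adjacent inS outS (dirΔ o (st.C o)) o'))

/-- A terminating (complete) execution of the construction in `n` steps. -/
def Exec (dirΔ : O → Set S → Set S) (Si : Set S)
    (f : ℕ → CState O S) (n : ℕ) : Prop :=
  Init inS outS Si (f 0) ∧
  (∀ k < n, CStep inS outS dirΔ (f k) (f (k + 1))) ∧
  (f n).queue = []

/-- The edge set contains a directed cycle (the construction aborts). -/
def HasCycle (E : Set (O × O)) : Prop :=
  ∃ v, Relation.TransGen (fun a b => (a, b) ∈ E) v v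

end

/-!
Call a pair `(I, T)` of input sets and triggered nodes closed if it contains the initial deltas
and is stable under one propagation step. Since each `dir_Δ(o, ·)` is monotone, a run never leaves
a closed pair, so its edges lie among the edges the pair determines. Conversely, the inputs a run
accumulates at each node, together with the nodes it dequeues, form a closed pair whose edges the
run does produce: by union monotonicity, `dir_Δ` of the accumulated input of a node is the union of
the outputs computed at its individual dequeues. Applied to two runs, this gives mutual inclusion
of their edge sets.
-/

theorem map_biUnion_of_map_union {α β ι : Type*} {d : Set α → Set β}
    (hd : ∀ A B, d A ∪ d B = d (A ∪ B)) {s : Finset ι} (hs : s.Nonempty) (A : ι → Set α) :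
    d (⋃ i ∈ s, A i) = ⋃ i ∈ s, d (A i) := by
  induction hs using Finset.Nonempty.cons_induction with
  | singleton i => simp
  | cons i s hi hs ih =>
    classical
    rw [Finset.cons_eq_insert, Finset.set_biUnion_insert, Finset.set_biUnion_insert, ← hd, ih]

theorem monotone_of_map_union {α β : Type*} {d : Set α → Set β}
    (hd : ∀ A B, d A ∪ d B = d (A ∪ B)) : Monotone d := fun A B h => by
  rw [← Set.union_eq_self_of_subset_left h, ← hd]
  exact Set.subset_union_left

section Adjacent

variable {O S : Type*} {inS outS : O → Set S} {X Y : Set S} {o : O}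

theorem Adjacent.mono (h : Adjacent inS outS X o) (hXY : X ⊆ Y) : Adjacent inS outS Y o :=
  Set.Nonempty.mono (Set.inter_subset_inter_right _ hXY) h

theorem adjacent_of_mem_inS {x : S} (hX : x ∈ X) (hin : x ∈ inS o) : Adjacent inS outS X o :=
  ⟨x, Or.inl hin, hX⟩

theorem adjacent_biUnion_iff {ι : Type*} {s : Finset ι} {A : ι → Set S} :
    Adjacent inS outS (⋃ i ∈ s, A i) o ↔ ∃ i ∈ s, Adjacent inS outS (A i) o := by
  simp only [Adjacent, Set.inter_iUnion₂, Set.nonempty_iUnion, exists_prop]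

end Adjacent

section Closure

variable {O S : Type*} (inS outS : O → Set S) (dirΔ : O → Set S → Set S) (Si : Set S)

/-- `T` is meant to contain the triggered nodes and `I o` the slots whose deltas reach the input
of `o`; the paper's closure `edges(Si)` is `flowEdges` of the least closed pair. -/
structure FlowClosed (I : O → Set S) (T : Set O) : Prop where
  mem_of_adjacent : ∀ o, Adjacent inS outS Si o → o ∈ T
  inter_subset : ∀ o, Si ∩ inS o ⊆ I o
  propagate : ∀ o' ∈ T, ∀ o, o ≠ o' → Adjacent inS outS (dirΔ o' (I o')) o →
    o ∈ T ∧ dirΔ o' (I o') ∩ inS o ⊆ I o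

def flowEdges (I : O → Set S) (T : Set O) : Set (O × O) :=
  {e | e.1 ∈ T ∧ e.2 ≠ e.1 ∧ Adjacent inS outS (dirΔ e.1 (I e.1)) e.2}

structure CState.Below (I : O → Set S) (T : Set O) (st : CState O S) : Prop where
  C_subset : ∀ o, st.C o ⊆ I o
  mem_of_mem_queue : ∀ o ∈ st.queue, o ∈ T
  edges_subset : st.edges ⊆ flowEdges inS outS dirΔ I T

variable {inS outS dirΔ Si} {I : O → Set S} {T : Set O} {st st' : CState O S}

theorem Init.below (h : Init inS outS Si st) (hc : FlowClosed inS outS dirΔ Si I T) :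
    st.Below inS outS dirΔ I T := by
  obtain ⟨-, hqueue, hC, hedges⟩ := h
  refine ⟨fun o => ?_, fun o ho => hc.mem_of_adjacent o ((hqueue o).mp ho), ?_⟩
  · rw [hC o]
    exact hc.inter_subset o
  · rw [hedges]
    exact Set.empty_subset _

theorem CStep.below (hmono : ∀ o, Monotone (dirΔ o)) (hc : FlowClosed inS outS dirΔ Si I T)
    (h : CStep inS outS dirΔ st st') (hb : st.Below inS outS dirΔ I T) :
    st'.Below inS outS dirΔ I T := by
  obtain ⟨o₀, q, hq, hedges, hC₀, hC, -, hqueue⟩ := h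
  have ho₀ : o₀ ∈ T := hb.mem_of_mem_queue o₀ (by simp [hq])
  have hdir : dirΔ o₀ (st.C o₀) ⊆ dirΔ o₀ (I o₀) := hmono o₀ (hb.C_subset o₀)
  have hprop : ∀ o, o ≠ o₀ → Adjacent inS outS (dirΔ o₀ (st.C o₀)) o →
      o ∈ T ∧ dirΔ o₀ (I o₀) ∩ inS o ⊆ I o := fun o hne hadj =>
    hc.propagate o₀ ho₀ o hne (hadj.mono hdir)
  refine ⟨fun o => ?_, fun o ho => ?_, ?_⟩
  · by_cases hne : o = o₀
    · subst hne
      simp [hC₀]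
    · rw [hC o hne]
      rintro x (hx | ⟨⟨hxdir, hxin⟩, hadj⟩)
      · exact hb.C_subset o hx
      · exact (hprop o hne hadj).2 ⟨hdir hxdir, hxin⟩
  · rcases (hqueue o).mp ho with ho | ⟨hne, hadj⟩
    · exact hb.mem_of_mem_queue o (by simp [hq, ho])
    · exact (hprop o hne hadj).1
  · rw [hedges]
    rintro ⟨a, b⟩ (hab | ⟨rfl, hne, hadj⟩)
    · exact hb.edges_subset hab
    · exact ⟨ho₀, hne, hadj.mono hdir⟩

theorem Exec.below {f : ℕ → CState O S} {n : ℕ} (hmono : ∀ o, Monotone (dirΔ o))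
    (hf : Exec inS outS dirΔ Si f n) (hc : FlowClosed inS outS dirΔ Si I T) :
    ∀ k ≤ n, (f k).Below inS outS dirΔ I T := by
  intro k hk
  induction k with
  | zero => exact hf.1.below hc
  | succ k ih => exact (hf.2.1 k hk).below hmono hc (ih (by omega))

end Closure


section Run

variable {O S : Type*} {inS outS : O → Set S} {dirΔ : O → Set S → Set S} {Si : Set S}
  {f : ℕ → CState O S} {n : ℕ}

open Classical in
noncomputable def dequeueTimes (f : ℕ → CState O S) (n : ℕ) (o : O) : Finset ℕ :=
  (Finset.range n).filter fun k => (f k).queue.head? = some o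

def fired (f : ℕ → CState O S) (n : ℕ) : Set O :=
  {o | (dequeueTimes f n o).Nonempty}

def totalInput (f : ℕ → CState O S) (n : ℕ) (o : O) : Set S :=
  ⋃ k ∈ dequeueTimes f n o, (f k).C o

theorem mem_dequeueTimes {k : ℕ} {o : O} :
    k ∈ dequeueTimes f n o ↔ k < n ∧ (f k).queue.head? = some o := by
  simp [dequeueTimes]

theorem Exec.edges_subset_of_le (hf : Exec inS outS dirΔ Si f n) {k : ℕ} (hk : k ≤ n) :
    (f k).edges ⊆ (f n).edges := by
  induction hk using Nat.decreasingInduction with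
  | self => exact subset_rfl
  | of_succ k hk ih =>
    obtain ⟨_, _, _, hedges, -⟩ := hf.2.1 k hk
    exact (hedges ▸ Set.subset_union_left).trans ih

theorem Exec.exists_dequeue (hf : Exec inS outS dirΔ Si f n) {k : ℕ} (hk : k ≤ n) {o : O}
    (ho : o ∈ (f k).queue) : ∃ l ∈ dequeueTimes f n o, (f k).C o ⊆ (f l).C o := by
  induction hk using Nat.decreasingInduction with
  | self => simp [hf.2.2] at ho
  | of_succ k hk ih =>
    obtain ⟨o₀, q, hq, -, -, hC, -, hqueue⟩ := hf.2.1 k hk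
    by_cases hne : o = o₀
    · subst hne
      exact ⟨k, mem_dequeueTimes.mpr ⟨hk, by simp [hq]⟩, subset_rfl⟩
    · have hoq : o ∈ q := by simpa [hq, hne] using ho
      obtain ⟨l, hl, hsub⟩ := ih ((hqueue o).mpr (Or.inl hoq))
      exact ⟨l, hl, (hC o hne ▸ Set.subset_union_left).trans hsub⟩

theorem Exec.mem_fired_and_subset_totalInput (hf : Exec inS outS dirΔ Si f n) {k : ℕ}
    (hk : k ≤ n) {o : O} (ho : o ∈ (f k).queue) :
    o ∈ fired f n ∧ (f k).C o ⊆ totalInput f n o := by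
  obtain ⟨l, hl, hsub⟩ := hf.exists_dequeue hk ho
  exact ⟨⟨l, hl⟩, hsub.trans (Set.subset_biUnion_of_mem (u := fun k => (f k).C o) hl)⟩

theorem Exec.propagate (hf : Exec inS outS dirΔ Si f n) {k : ℕ} {o' o : O}
    (hk : k ∈ dequeueTimes f n o') (hne : o ≠ o')
    (hadj : Adjacent inS outS (dirΔ o' ((f k).C o')) o) :
    (o', o) ∈ (f (k + 1)).edges ∧ o ∈ (f (k + 1)).queue ∧
      dirΔ o' ((f k).C o') ∩ inS o ⊆ (f (k + 1)).C o := by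
  obtain ⟨hkn, hhead⟩ := mem_dequeueTimes.mp hk
  obtain ⟨o₀, q, hq, hedges, -, hC, -, hqueue⟩ := hf.2.1 k hkn
  obtain rfl : o₀ = o' := by simpa [hq] using hhead
  refine ⟨hedges ▸ Or.inr ⟨rfl, hne, hadj⟩, (hqueue o).mpr (Or.inr ⟨hne, hadj⟩), ?_⟩
  rw [hC o hne]
  exact fun x hx => Or.inr ⟨hx, hadj⟩

theorem dir_totalInput (hum : ∀ o A B, dirΔ o A ∪ dirΔ o B = dirΔ o (A ∪ B)) {o : O}
    (ho : o ∈ fired f n) :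
    dirΔ o (totalInput f n o) = ⋃ k ∈ dequeueTimes f n o, dirΔ o ((f k).C o) :=
  map_biUnion_of_map_union (hum o) ho _

theorem Exec.flowClosed (hum : ∀ o A B, dirΔ o A ∪ dirΔ o B = dirΔ o (A ∪ B))
    (hf : Exec inS outS dirΔ Si f n) :
    FlowClosed inS outS dirΔ Si (totalInput f n) (fired f n) := by
  obtain ⟨-, hqueue₀, hC₀, -⟩ := hf.1
  refine ⟨fun o ho => (hf.mem_fired_and_subset_totalInput (Nat.zero_le n)
      ((hqueue₀ o).mpr ho)).1, fun o x hx => ?_, fun o' ho' o hne hadj => ⟨?_, ?_⟩⟩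
  · have ho : o ∈ (f 0).queue := (hqueue₀ o).mpr (adjacent_of_mem_inS hx.1 hx.2)
    exact (hf.mem_fired_and_subset_totalInput (Nat.zero_le n) ho).2 (hC₀ o ▸ hx)
  · rw [dir_totalInput hum ho', adjacent_biUnion_iff] at hadj
    obtain ⟨k, hk, hadj⟩ := hadj
    have hkn := (mem_dequeueTimes.mp hk).1
    exact (hf.mem_fired_and_subset_totalInput hkn (hf.propagate hk hne hadj).2.1).1
  · rw [dir_totalInput hum ho']
    rintro x ⟨hx, hxin⟩
    obtain ⟨k, hk, hx⟩ := Set.mem_iUnion₂.mp hx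
    obtain ⟨-, hoq, hsub⟩ := hf.propagate hk hne (adjacent_of_mem_inS hx hxin)
    exact (hf.mem_fired_and_subset_totalInput (mem_dequeueTimes.mp hk).1 hoq).2 (hsub ⟨hx, hxin⟩)

theorem Exec.flowEdges_subset (hum : ∀ o A B, dirΔ o A ∪ dirΔ o B = dirΔ o (A ∪ B))
    (hf : Exec inS outS dirΔ Si f n) :
    flowEdges inS outS dirΔ (totalInput f n) (fired f n) ⊆ (f n).edges := by
  rintro ⟨o', o⟩ ⟨ho', hne, hadj⟩
  rw [dir_totalInput hum ho', adjacent_biUnion_iff] at hadj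
  obtain ⟨k, hk, hadj⟩ := hadj
  exact hf.edges_subset_of_le (mem_dequeueTimes.mp hk).1 (hf.propagate hk hne hadj).1

theorem Exec.edges_subset (hum : ∀ o A B, dirΔ o A ∪ dirΔ o B = dirΔ o (A ∪ B))
    {g : ℕ → CState O S} {m : ℕ} (hf : Exec inS outS dirΔ Si f n)
    (hg : Exec inS outS dirΔ Si g m) : (f n).edges ⊆ (g m).edges :=
  ((hf.below (fun o => monotone_of_map_union (hum o)) (hg.flowClosed hum) n le_rfl)
    |>.edges_subset).trans (hg.flowEdges_subset hum)

end Run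

theorem stmt9_general {O S : Type*} (inS outS : O → Set S)
    (dirΔ : O → Set S → Set S)
    (hum : ∀ o A B, dirΔ o A ∪ dirΔ o B = dirΔ o (A ∪ B))
    (Si : Set S)
    (f g : ℕ → CState O S) (n m : ℕ)
    (hf : Exec inS outS dirΔ Si f n)
    (hg : Exec inS outS dirΔ Si g m) :
    (f n).edges = (g m).edges :=
  (hf.edges_subset hum hg).antisymm (hg.edges_subset hum hf)

/-- If all `dir_Δ` functions are union monotonic, then any two terminating,
non-aborting executions of the dependency-graph construction for the same eGDN
and the same set `Si` of initially modified slots produce the same final edge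
set of `G_T`, regardless of the order in which nodes were enqueued/dequeued. -/
theorem stmt9 {O S : Type*} (inS outS : O → Set S)
    (dirΔ : O → Set S → Set S)
    (hum : ∀ o A B, dirΔ o A ∪ dirΔ o B = dirΔ o (A ∪ B))
    (Si : Set S)
    (f g : ℕ → CState O S) (n m : ℕ)
    (hf : Exec inS outS dirΔ Si f n)
    (hg : Exec inS outS dirΔ Si g m)
    (hfa : ¬ HasCycle (f n).edges)
    (hga : ¬ HasCycle (g m).edges) :
    (f n).edges = (g m).edges :=
  stmt9_general inS outS dirΔ hum Si f g n m hf hg
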